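/- arXiv:2305.17643 — 3 statements merged into one kernel-verified Lean document; each statement's English description precedes it below -/
import Mathlib

section
/- (Theorem 4, double robustness: correct propensity score.) For any 𝔛-measurable integrable functions μ1*(X), μ0*(X), if the working propensity score is correct (e*(X) = e(X) almost surely), then the population doubly robust functional equals τ: E[ {e(X) + (1−e(X))/ε1(X)}·Z·Y/e(X) − (Z−e(X))·μ1*(X)/(e(X)·ε1(X)) ] − E[ {e(X)·ε0(X) + 1−e(X)}·(1−Z)·Y/(1−e(X)) − (e(X)−Z)·μ0*(X)·ε0(X)/(1−e(X)) ] = τ. -/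
/-!
For the treated arm put `d = (1 - e) / (e ε₁)` and `c = μ₁* / ε₁`; the integrand is then
`Z Y(1) + d Z (Y(1) - μ₁*) + c (1 - Z)`. Given `𝔛`, the last term has mean `c (1 - e) = d μ₁* e`,
which cancels the `μ₁*` part of the middle one, whatever `μ₁*` is. What remains is
`d E[Z Y(1) | 𝔛] = E[(1 - Z) Y(1) | 𝔛]` by the sensitivity relation, so the arm integrates to
`E[Z Y(1)] + E[(1 - Z) Y(1)] = E[Y(1)]`. The control arm is the same computation for `1 - Z`.
-/

open MeasureTheory

section

variable {Ω : Type*} {m m₀ : MeasurableSpace Ω} {P : Measure Ω}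

lemma binary_one_sub {W : Ω → ℝ} (hW01 : ∀ ω, W ω = 0 ∨ W ω = 1) (ω : Ω) :
    1 - W ω = 0 ∨ 1 - W ω = 1 := by
  rcases hW01 ω with h | h <;> simp [h]

lemma integrable_binary_mul {W g : Ω → ℝ} (hW : AEStronglyMeasurable W P)
    (hW01 : ∀ ω, W ω = 0 ∨ W ω = 1) (hg : Integrable g P) :
    Integrable (fun ω => W ω * g ω) P :=
  hg.bdd_mul (c := 1) hW (ae_of_all _ fun ω => by rcases hW01 ω with h | h <;> simp [h])

lemma integrable_binary [IsFiniteMeasure P] {W : Ω → ℝ} (hW : AEStronglyMeasurable W P)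
    (hW01 : ∀ ω, W ω = 0 ∨ W ω = 1) : Integrable W P := by
  simpa using integrable_binary_mul hW hW01 (integrable_const (1 : ℝ))

lemma condExp_one_sub [IsFiniteMeasure P] (hm : m ≤ m₀) {W p : Ω → ℝ} (hW : Integrable W P)
    (hp : p =ᵐ[P] P[W|m]) :
    P[fun ω => 1 - W ω|m] =ᵐ[P] fun ω => 1 - p ω := by
  filter_upwards [condExp_sub (integrable_const 1) hW m, hp] with ω hω hpω
  simpa [condExp_const hm, Pi.sub_def, hpω] using hω

lemma condExp_augmentation_eq [IsFiniteMeasure P] (hm : m ≤ m₀) {W V μs d c p : Ω → ℝ}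
    (hW : Integrable W P) (hWV : Integrable (fun ω => W ω * V ω) P)
    (hμsW : Integrable (fun ω => μs ω * W ω) P)
    (hμs : Measurable[m] μs) (hd : Measurable[m] d) (hc : Measurable[m] c)
    (hdW : Integrable (fun ω => d ω * (W ω * (V ω - μs ω))) P)
    (hcW : Integrable (fun ω => c ω * (1 - W ω)) P)
    (hp : p =ᵐ[P] P[W|m])
    (hbalance : ∀ᵐ ω ∂P, c ω * (1 - p ω) = d ω * (μs ω * p ω))
    (hsens : ∀ᵐ ω ∂P, d ω * P[fun ω' => W ω' * V ω'|m] ω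
      = P[fun ω' => (1 - W ω') * V ω'|m] ω) :
    P[fun ω => d ω * (W ω * (V ω - μs ω)) + c ω * (1 - W ω)|m]
      =ᵐ[P] P[fun ω => (1 - W ω) * V ω|m] := by
  have hWres : Integrable (fun ω => W ω * (V ω - μs ω)) P :=
    (hWV.sub hμsW).congr (ae_of_all _ fun ω => by simp only [Pi.sub_apply]; ring)
  have hres : P[fun ω => W ω * (V ω - μs ω)|m]
      =ᵐ[P] fun ω => P[fun ω' => W ω' * V ω'|m] ω - μs ω * p ω := by
    have hsplit : P[fun ω => W ω * (V ω - μs ω)|m]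
        =ᵐ[P] P[(fun ω => W ω * V ω) - (fun ω => μs ω * W ω)|m] :=
      condExp_congr_ae (ae_of_all _ fun ω => by simp only [Pi.sub_apply]; ring)
    filter_upwards [hsplit, condExp_sub hWV hμsW m,
      condExp_mul_of_stronglyMeasurable_left hμs.stronglyMeasurable hμsW hW, hp]
      with ω h₁ h₂ h₃ h₄
    simp only [Pi.sub_def, Pi.mul_def] at h₁ h₂ h₃
    rw [h₁, h₂, h₃, h₄]
  filter_upwards [condExp_add hdW hcW m,
    condExp_mul_of_stronglyMeasurable_left hd.stronglyMeasurable hdW hWres,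
    condExp_mul_of_stronglyMeasurable_left hc.stronglyMeasurable hcW
      ((integrable_const 1).sub hW),
    hres, condExp_one_sub hm hW hp, hbalance, hsens] with ω hadd hdmul hcmul hres hone hbal hs
  simp only [Pi.add_def, Pi.mul_def] at hadd hdmul hcmul
  rw [hadd, hdmul, hcmul, hres, hone, ← hs]
  linear_combination hbal

lemma integral_eq_of_augmentation [IsFiniteMeasure P] (hm : m ≤ m₀) {W V μs d c p f : Ω → ℝ}
    (hW : AEStronglyMeasurable W P) (hW01 : ∀ ω, W ω = 0 ∨ W ω = 1) (hV : Integrable V P)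
    (hμs : Measurable[m] μs) (hμsint : Integrable μs P) (hd : Measurable[m] d)
    (hc : Measurable[m] c) (hp : p =ᵐ[P] P[W|m])
    (hbalance : ∀ᵐ ω ∂P, c ω * (1 - p ω) = d ω * (μs ω * p ω))
    (hsens : ∀ᵐ ω ∂P, d ω * P[fun ω' => W ω' * V ω'|m] ω
      = P[fun ω' => (1 - W ω') * V ω'|m] ω)
    (hf : Integrable f P)
    (hfeq : ∀ᵐ ω ∂P, f ω = W ω * V ω + (d ω * (W ω * (V ω - μs ω)) + c ω * (1 - W ω))) :
    ∫ ω, f ω ∂P = ∫ ω, V ω ∂P := by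
  have hWint := integrable_binary hW hW01
  have hWV := integrable_binary_mul hW hW01 hV
  have hW' : AEStronglyMeasurable (fun ω => 1 - W ω) P := aestronglyMeasurable_const.sub hW
  have hW'V := integrable_binary_mul hW' (binary_one_sub hW01) hV
  have hμsW : Integrable (fun ω => μs ω * W ω) P := by
    simpa only [mul_comm] using integrable_binary_mul hW hW01 hμsint
  -- `(1 - W) f` isolates the term `c (1 - W)` because `W (1 - W) = 0`.
  have hcW : Integrable (fun ω => c ω * (1 - W ω)) P := by
    refine (integrable_binary_mul hW' (binary_one_sub hW01) hf).congr ?_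
    filter_upwards [hfeq] with ω hfω
    rcases hW01 ω with h | h <;> rw [hfω, h] <;> ring
  have hdW : Integrable (fun ω => d ω * (W ω * (V ω - μs ω))) P := by
    refine ((hf.sub hWV).sub hcW).congr ?_
    filter_upwards [hfeq] with ω hfω
    simp only [Pi.sub_apply, hfω]
    ring
  calc ∫ ω, f ω ∂P
      = ∫ ω, W ω * V ω ∂P
        + ∫ ω, d ω * (W ω * (V ω - μs ω)) + c ω * (1 - W ω) ∂P :=
        (integral_congr_ae hfeq).trans (integral_add hWV (hdW.add hcW))
    _ = ∫ ω, W ω * V ω ∂P + ∫ ω, (1 - W ω) * V ω ∂P := by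
        congr 1
        exact (integral_condExp hm).symm.trans <| (integral_congr_ae <| condExp_augmentation_eq
          hm hWint hWV hμsW hμs hd hc hdW hcW hp hbalance hsens).trans (integral_condExp hm)
    _ = ∫ ω, V ω ∂P := by
        rw [← integral_add hWV hW'V]
        congr with ω
        ring

lemma integral_doublyRobust_arm_eq [IsFiniteMeasure P] (hm : m ≤ m₀) {W V e ε μs : Ω → ℝ}
    (hW : AEStronglyMeasurable W P) (hW01 : ∀ ω, W ω = 0 ∨ W ω = 1) (hV : Integrable V P)
    (he : Measurable[m] e) (hpe : e =ᵐ[P] P[W|m]) (he0 : ∀ᵐ ω ∂P, e ω ≠ 0)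
    (hε : Measurable[m] ε) (hε0 : ∀ᵐ ω ∂P, ε ω ≠ 0)
    (hsens : ∀ᵐ ω ∂P, (1 - e ω) * P[fun ω' => W ω' * V ω'|m] ω
      = ε ω * e ω * P[fun ω' => (1 - W ω') * V ω'|m] ω)
    (hμs : Measurable[m] μs) (hμsint : Integrable μs P)
    (hint : Integrable (fun ω => (e ω + (1 - e ω) / ε ω) * (W ω * V ω) / e ω
      - (W ω - e ω) * μs ω / (e ω * ε ω)) P) :
    ∫ ω, ((e ω + (1 - e ω) / ε ω) * (W ω * V ω) / e ω
      - (W ω - e ω) * μs ω / (e ω * ε ω)) ∂P = ∫ ω, V ω ∂P := by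
  refine integral_eq_of_augmentation hm hW hW01 hV hμs hμsint
    (d := fun ω => (1 - e ω) / (e ω * ε ω)) ((measurable_const.sub he).div (he.mul hε))
    (c := fun ω => μs ω / ε ω) (hμs.div hε) hpe ?_ ?_ hint ?_
  · filter_upwards [he0, hε0] with ω he0 hε0
    field_simp
  · filter_upwards [he0, hε0, hsens] with ω he0 hε0 hs
    field_simp
    linear_combination hs
  · filter_upwards [he0, hε0] with ω he0 hε0
    field_simp
    ring

end

theorem double_robustness_correct_pscore_general
    {Ω : Type*} [F : MeasurableSpace Ω] (P : Measure Ω) [IsProbabilityMeasure P]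
    (Z Y1 Y0 Y : Ω → ℝ)
    (hZmeas : Measurable Z) (hZ01 : ∀ ω, Z ω = 0 ∨ Z ω = 1)
    (hY1int : Integrable Y1 P) (hY0int : Integrable Y0 P)
    (hYdef : ∀ ω, Y ω = Z ω * Y1 ω + (1 - Z ω) * Y0 ω)
    (mX : MeasurableSpace Ω) (hmX : mX ≤ F)
    (eX : Ω → ℝ) (heXmeas : Measurable[mX] eX) (heX : eX =ᵐ[P] P[Z|mX])
    (hov : ∀ᵐ ω ∂P, 0 < eX ω ∧ eX ω < 1)
    (eps1 eps0 : Ω → ℝ)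
    (heps1meas : Measurable[mX] eps1) (heps0meas : Measurable[mX] eps0)
    (heps1pos : ∀ᵐ ω ∂P, 0 < eps1 ω) (heps0pos : ∀ᵐ ω ∂P, 0 < eps0 ω)
    (hsens1 : ∀ᵐ ω ∂P, (1 - eX ω) * (P[fun ω' => Z ω' * Y1 ω'|mX]) ω
        = eps1 ω * eX ω * (P[fun ω' => (1 - Z ω') * Y1 ω'|mX]) ω)
    (hsens0 : ∀ᵐ ω ∂P, (1 - eX ω) * (P[fun ω' => Z ω' * Y0 ω'|mX]) ω
        = eps0 ω * eX ω * (P[fun ω' => (1 - Z ω') * Y0 ω'|mX]) ω)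
    (mu1s mu0s : Ω → ℝ)
    (hmu1smeas : Measurable[mX] mu1s) (hmu0smeas : Measurable[mX] mu0s)
    (hmu1sint : Integrable mu1s P) (hmu0sint : Integrable mu0s P)
    (hint1 : Integrable (fun ω =>
      (eX ω + (1 - eX ω) / eps1 ω) * (Z ω * Y ω) / eX ω
        - (Z ω - eX ω) * mu1s ω / (eX ω * eps1 ω)) P)
    (hint0 : Integrable (fun ω =>
      (eX ω * eps0 ω + 1 - eX ω) * ((1 - Z ω) * Y ω) / (1 - eX ω)
        - (eX ω - Z ω) * (mu0s ω * eps0 ω) / (1 - eX ω)) P) :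
    ∫ ω, ((eX ω + (1 - eX ω) / eps1 ω) * (Z ω * Y ω) / eX ω
        - (Z ω - eX ω) * mu1s ω / (eX ω * eps1 ω)) ∂P
      - ∫ ω, ((eX ω * eps0 ω + 1 - eX ω) * ((1 - Z ω) * Y ω) / (1 - eX ω)
        - (eX ω - Z ω) * (mu0s ω * eps0 ω) / (1 - eX ω)) ∂P
      = ∫ ω, Y1 ω ∂P - ∫ ω, Y0 ω ∂P := by
  have hZY1 (ω : Ω) : Z ω * Y ω = Z ω * Y1 ω := by
    rcases hZ01 ω with h | h <;> simp [hYdef ω, h]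
  have hZY0 (ω : Ω) : (1 - Z ω) * Y ω = (1 - Z ω) * Y0 ω := by
    rcases hZ01 ω with h | h <;> simp [hYdef ω, h]
  -- The control arm is the treated arm for `1 - Z`, with `1 - e` and `ε₀⁻¹` in place of `e`, `ε₁`.
  have hcontrol : (fun ω => (eX ω * eps0 ω + 1 - eX ω) * ((1 - Z ω) * Y0 ω) / (1 - eX ω)
        - (eX ω - Z ω) * (mu0s ω * eps0 ω) / (1 - eX ω))
      = fun ω => ((1 - eX ω) + (1 - (1 - eX ω)) / (eps0 ω)⁻¹) * ((1 - Z ω) * Y0 ω) / (1 - eX ω)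
        - ((1 - Z ω) - (1 - eX ω)) * mu0s ω / ((1 - eX ω) * (eps0 ω)⁻¹) := by
    funext ω
    simp only [div_inv_eq_mul, div_mul_eq_div_div]
    ring
  simp only [hZY1, hZY0, hcontrol] at hint1 hint0 ⊢
  rw [integral_doublyRobust_arm_eq hmX hZmeas.aestronglyMeasurable hZ01 hY1int heXmeas heX
      (hov.mono fun ω h => h.1.ne') heps1meas (heps1pos.mono fun ω h => h.ne') hsens1
      hmu1smeas hmu1sint hint1,
    integral_doublyRobust_arm_eq hmX (W := fun ω => 1 - Z ω) (e := fun ω => 1 - eX ω)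
      (ε := fun ω => (eps0 ω)⁻¹) (hZmeas.const_sub 1).aestronglyMeasurable (binary_one_sub hZ01)
      hY0int (heXmeas.const_sub 1) ?_ (hov.mono fun ω h => (sub_pos.2 h.2).ne')
      heps0meas.inv (heps0pos.mono fun ω h => (inv_pos.2 h).ne') ?_ hmu0smeas hmu0sint hint0]
  · exact (condExp_one_sub hmX (integrable_binary hZmeas.aestronglyMeasurable hZ01) heX).symm
  · filter_upwards [hsens0, heps0pos] with ω hs hε
    simp only [sub_sub_cancel]
    field_simp
    linear_combination -hs

/-- Theorem 4 (double robustness: correct propensity score). -/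
theorem double_robustness_correct_pscore
    {Ω : Type*} [F : MeasurableSpace Ω] (P : Measure Ω) [IsProbabilityMeasure P]
    (Z Y1 Y0 Y : Ω → ℝ)
    (hZmeas : Measurable Z) (hZ01 : ∀ ω, Z ω = 0 ∨ Z ω = 1)
    (hY1int : Integrable Y1 P) (hY0int : Integrable Y0 P)
    (hYdef : ∀ ω, Y ω = Z ω * Y1 ω + (1 - Z ω) * Y0 ω)
    (mX : MeasurableSpace Ω) (hmX : mX ≤ F)
    (eX : Ω → ℝ) (heXmeas : Measurable[mX] eX) (heX : eX =ᵐ[P] P[Z|mX])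
    (hov : ∀ᵐ ω ∂P, 0 < eX ω ∧ eX ω < 1)
    (mu1 mu0 : Ω → ℝ) (hmu1meas : Measurable[mX] mu1) (hmu0meas : Measurable[mX] mu0)
    (hmu1 : (fun ω => mu1 ω * eX ω) =ᵐ[P] P[fun ω => Z ω * Y ω|mX])
    (hmu0 : (fun ω => mu0 ω * (1 - eX ω)) =ᵐ[P] P[fun ω => (1 - Z ω) * Y ω|mX])
    (eps1 eps0 : Ω → ℝ)
    (heps1meas : Measurable[mX] eps1) (heps0meas : Measurable[mX] eps0)
    (heps1pos : ∀ᵐ ω ∂P, 0 < eps1 ω) (heps0pos : ∀ᵐ ω ∂P, 0 < eps0 ω)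
    (hsens1 : ∀ᵐ ω ∂P, (1 - eX ω) * (P[fun ω' => Z ω' * Y1 ω'|mX]) ω
        = eps1 ω * eX ω * (P[fun ω' => (1 - Z ω') * Y1 ω'|mX]) ω)
    (hsens0 : ∀ᵐ ω ∂P, (1 - eX ω) * (P[fun ω' => Z ω' * Y0 ω'|mX]) ω
        = eps0 ω * eX ω * (P[fun ω' => (1 - Z ω') * Y0 ω'|mX]) ω)
    (mu1s mu0s : Ω → ℝ)
    (hmu1smeas : Measurable[mX] mu1s) (hmu0smeas : Measurable[mX] mu0s)
    (hmu1sint : Integrable mu1s P) (hmu0sint : Integrable mu0s P)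
    (hint1 : Integrable (fun ω =>
      (eX ω + (1 - eX ω) / eps1 ω) * (Z ω * Y ω) / eX ω
        - (Z ω - eX ω) * mu1s ω / (eX ω * eps1 ω)) P)
    (hint0 : Integrable (fun ω =>
      (eX ω * eps0 ω + 1 - eX ω) * ((1 - Z ω) * Y ω) / (1 - eX ω)
        - (eX ω - Z ω) * (mu0s ω * eps0 ω) / (1 - eX ω)) P) :
    ∫ ω, ((eX ω + (1 - eX ω) / eps1 ω) * (Z ω * Y ω) / eX ω
        - (Z ω - eX ω) * mu1s ω / (eX ω * eps1 ω)) ∂P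
      - ∫ ω, ((eX ω * eps0 ω + 1 - eX ω) * ((1 - Z ω) * Y ω) / (1 - eX ω)
        - (eX ω - Z ω) * (mu0s ω * eps0 ω) / (1 - eX ω)) ∂P
      = ∫ ω, Y1 ω ∂P - ∫ ω, Y0 ω ∂P :=
  double_robustness_correct_pscore_general (F := F) P Z Y1 Y0 Y hZmeas hZ01 hY1int hY0int hYdef mX
    hmX eX heXmeas heX hov eps1 eps0 heps1meas heps0meas heps1pos heps0pos hsens1 hsens0 mu1s mu0s
    hmu1smeas hmu0smeas hmu1sint hmu0sint hint1 hint0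
end

section
/- (Theorem 4, double robustness: correct outcome model.) For any 𝔛-measurable function e*(X) with 0 < e*(X) < 1 almost surely, if the working outcome models are correct (μ1*(X) = μ1(X) and μ0*(X) = μ0(X) almost surely), then the population doubly robust functional equals τ: E[ {e*(X) + (1−e*(X))/ε1(X)}·Z·Y/e*(X) − (Z−e*(X))·μ1(X)/(e*(X)·ε1(X)) ] − E[ {e*(X)·ε0(X) + 1−e*(X)}·(1−Z)·Y/(1−e*(X)) − (e*(X)−Z)·μ0(X)·ε0(X)/(1−e*(X)) ] = τ. -/
/-!
The treated-arm score splits as `Z Y + W · Z (Y - μ₁) + (1 - Z) μ₁ / ε₁` with the `𝔛`-measurable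
weight `W = (1 - e*) / (e* ε₁)`. Since the outcome model is correct, the residual `Z (Y - μ₁)` has
conditional mean `μ₁ e - μ₁ e = 0` given `𝔛`, so the middle term has mean zero for every `e*`; and
the sensitivity relation says `μ₁ / ε₁ · (1 - e) = E[(1 - Z) Y(1) | 𝔛]`, so the last term has the
mean of `(1 - Z) Y(1)`. The control arm is the treated arm for `1 - Z`, `1 - e`, `1 - e*`, `1 / ε₀`.
-/

open scoped ENNReal

namespace MeasureTheory

variable {Ω : Type*} {m mΩ : MeasurableSpace Ω} {P : Measure Ω}

theorem lintegral_mul_ofReal_condExp (hm : m ≤ mΩ) [SigmaFinite (P.trim hm)]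
    {f : Ω → ℝ≥0∞} (hf : Measurable[m] f) {g : Ω → ℝ} (hg : Integrable g P)
    (hg0 : 0 ≤ᵐ[P] g) :
    ∫⁻ ω, .ofReal (g ω) * f ω ∂P = ∫⁻ ω, .ofReal (P[g|m] ω) * f ω ∂P := by
  have htrim : (P.withDensity fun ω => .ofReal (g ω)).trim hm
      = (P.withDensity fun ω => .ofReal (P[g|m] ω)).trim hm := by
    refine @Measure.ext _ m _ _ fun s hs => ?_
    rw [trim_measurableSet_eq hm hs, trim_measurableSet_eq hm hs,
      withDensity_apply _ (hm s hs), withDensity_apply _ (hm s hs),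
      ← ofReal_integral_eq_lintegral_ofReal hg.integrableOn (ae_restrict_of_ae hg0),
      ← ofReal_integral_eq_lintegral_ofReal integrable_condExp.integrableOn
        (ae_restrict_of_ae (condExp_nonneg hg0)),
      setIntegral_condExp hm hg hs]
  have hfΩ : Measurable f := hf.mono hm le_rfl
  calc ∫⁻ ω, .ofReal (g ω) * f ω ∂P
      = ∫⁻ ω, f ω ∂(P.withDensity fun ω => .ofReal (g ω)).trim hm := by
        rw [lintegral_trim hm hf, lintegral_withDensity_eq_lintegral_mul₀
          hg.aemeasurable.ennreal_ofReal hfΩ.aemeasurable]; rfl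
    _ = ∫⁻ ω, .ofReal (P[g|m] ω) * f ω ∂P := by
        rw [htrim, lintegral_trim hm hf, lintegral_withDensity_eq_lintegral_mul₀
          integrable_condExp.aemeasurable.ennreal_ofReal hfΩ.aemeasurable]; rfl

theorem integrable_mul_of_integrable_mul_condExp (hm : m ≤ mΩ) [SigmaFinite (P.trim hm)]
    {f g : Ω → ℝ} (hf : Measurable[m] f) (hg : Integrable g P) (hg0 : 0 ≤ᵐ[P] g)
    (hfg : Integrable (fun ω => f ω * P[g|m] ω) P) :
    Integrable (fun ω => f ω * g ω) P := by
  refine ⟨(hf.mono hm le_rfl).aestronglyMeasurable.mul hg.aestronglyMeasurable, ?_⟩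
  have henorm {h : Ω → ℝ} (h0 : 0 ≤ᵐ[P] h) :
      (fun ω => ‖f ω * h ω‖ₑ) =ᵐ[P] fun ω => .ofReal (h ω) * ‖f ω‖ₑ := by
    filter_upwards [h0] with ω hω
    rw [enorm_mul, Real.enorm_eq_ofReal hω, mul_comm]
  rw [hasFiniteIntegral_iff_enorm, lintegral_congr_ae (henorm hg0),
    lintegral_mul_ofReal_condExp hm (f := fun ω => ‖f ω‖ₑ) (measurable_enorm.comp hf) hg hg0,
    ← lintegral_congr_ae (henorm (condExp_nonneg hg0))]
  exact hfg.2

theorem integral_mul_condExp (hm : m ≤ mΩ) [SigmaFinite (P.trim hm)] {f g : Ω → ℝ}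
    (hf : StronglyMeasurable[m] f) (hfg : Integrable (fun ω => f ω * g ω) P)
    (hg : Integrable g P) :
    ∫ ω, f ω * g ω ∂P = ∫ ω, f ω * P[g|m] ω ∂P :=
  (integral_condExp hm).symm.trans
    (integral_congr_ae (condExp_mul_of_stronglyMeasurable_left hf hfg hg))

theorem condExp_one_sub (hm : m ≤ mΩ) [IsFiniteMeasure P] {g : Ω → ℝ} (hg : Integrable g P) :
    P[fun ω => 1 - g ω|m] =ᵐ[P] fun ω => 1 - P[g|m] ω := by
  filter_upwards [condExp_sub (integrable_const (1 : ℝ)) hg m] with ω hω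
  rw [show (fun ω => 1 - g ω) = (fun _ => (1 : ℝ)) - g from rfl, hω, Pi.sub_apply,
    condExp_const hm]

theorem Integrable.zero_or_one_mul {Z f : Ω → ℝ} (hZ : Measurable Z)
    (hZ01 : ∀ ω, Z ω = 0 ∨ Z ω = 1) (hf : Integrable f P) :
    Integrable (fun ω => Z ω * f ω) P :=
  hf.bdd_mul hZ.aestronglyMeasurable (c := 1) <| ae_of_all _ fun ω => by
    rcases hZ01 ω with h | h <;> simp [h]

theorem integrable_of_zero_or_one [IsFiniteMeasure P] {Z : Ω → ℝ} (hZ : Measurable Z)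
    (hZ01 : ∀ ω, Z ω = 0 ∨ Z ω = 1) : Integrable Z P := by
  simpa using (integrable_const (1 : ℝ)).zero_or_one_mul (P := P) hZ hZ01

section Augmented

variable [IsFiniteMeasure P] {Z V e mu : Ω → ℝ}

theorem integral_mul_residual_eq_zero (hm : m ≤ mΩ) (hZ : Measurable Z)
    (hZ01 : ∀ ω, Z ω = 0 ∨ Z ω = 1) (hV : Integrable V P) (he : e =ᵐ[P] P[Z|m])
    (hmu : Measurable[m] mu) (hmue : (fun ω => mu ω * e ω) =ᵐ[P] P[fun ω => Z ω * V ω|m])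
    {W : Ω → ℝ} (hW : Measurable[m] W)
    (hWres : Integrable (fun ω => W ω * (Z ω * (V ω - mu ω))) P) :
    ∫ ω, W ω * (Z ω * (V ω - mu ω)) ∂P = 0 := by
  have hZint : Integrable Z P := integrable_of_zero_or_one hZ hZ01
  have hZV : Integrable (fun ω => Z ω * V ω) P := hV.zero_or_one_mul hZ hZ01
  have hmuZ : Integrable (fun ω => mu ω * Z ω) P := by
    refine integrable_mul_of_integrable_mul_condExp hm hmu hZint
      (ae_of_all _ fun ω => by rcases hZ01 ω with h | h <;> simp [h]) ?_
    refine (integrable_condExp.congr hmue.symm).congr ?_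
    filter_upwards [he] with ω hω
    rw [hω]
  have hres : Integrable (fun ω => Z ω * (V ω - mu ω)) P :=
    (hZV.sub hmuZ).congr (ae_of_all _ fun ω => by simp only [Pi.sub_apply]; ring)
  have hres_condExp : P[fun ω => Z ω * (V ω - mu ω)|m] =ᵐ[P] 0 := by
    have hsplit :
        (fun ω => Z ω * (V ω - mu ω)) = (fun ω => Z ω * V ω) - fun ω => mu ω * Z ω := by
      funext ω; simp only [Pi.sub_apply]; ring
    rw [hsplit]
    filter_upwards [condExp_sub hZV hmuZ m,
      condExp_mul_of_stronglyMeasurable_left hmu.stronglyMeasurable hmuZ hZint, hmue, he]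
      with ω hsub hpull hmueω heω
    rw [hsub, Pi.sub_apply, show (fun ω => mu ω * Z ω) = mu * Z from rfl, hpull, ← hmueω,
      Pi.mul_apply, heω, Pi.zero_apply, sub_self]
  calc ∫ ω, W ω * (Z ω * (V ω - mu ω)) ∂P
      = ∫ ω, W ω * P[fun ω => Z ω * (V ω - mu ω)|m] ω ∂P :=
        integral_mul_condExp hm hW.stronglyMeasurable hWres hres
    _ = ∫ _, (0 : ℝ) ∂P :=
        integral_congr_ae <| hres_condExp.mono fun ω hω => by
          simp only [hω, Pi.zero_apply, mul_zero]
    _ = 0 := integral_zero _ _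

theorem integral_one_sub_mul_eq (hm : m ≤ mΩ) (hZ : Integrable Z P) (he : e =ᵐ[P] P[Z|m])
    {c : Ω → ℝ} (hc : Measurable[m] c)
    (hce : (fun ω => c ω * (1 - e ω)) =ᵐ[P] P[fun ω => (1 - Z ω) * V ω|m])
    (hcint : Integrable (fun ω => (1 - Z ω) * c ω) P) :
    ∫ ω, (1 - Z ω) * c ω ∂P = ∫ ω, (1 - Z ω) * V ω ∂P := calc
  _ = ∫ ω, c ω * (1 - Z ω) ∂P := integral_congr_ae (ae_of_all _ fun ω => mul_comm _ _)
  _ = ∫ ω, c ω * P[fun ω => 1 - Z ω|m] ω ∂P :=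
      integral_mul_condExp hm hc.stronglyMeasurable
        (hcint.congr (ae_of_all _ fun ω => mul_comm _ _)) ((integrable_const 1).sub hZ)
  _ = ∫ ω, P[fun ω => (1 - Z ω) * V ω|m] ω ∂P := by
      refine integral_congr_ae ?_
      filter_upwards [condExp_one_sub hm hZ, he, hce] with ω hZω heω hceω
      rw [← hceω, hZω, heω]
  _ = ∫ ω, (1 - Z ω) * V ω ∂P := integral_condExp hm

theorem integral_eq_of_ae_eq_augmented (hm : m ≤ mΩ) (hZ : Measurable Z)
    (hZ01 : ∀ ω, Z ω = 0 ∨ Z ω = 1) (hV : Integrable V P) (he : e =ᵐ[P] P[Z|m])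
    (hmu : Measurable[m] mu) (hmue : (fun ω => mu ω * e ω) =ᵐ[P] P[fun ω => Z ω * V ω|m])
    {W c T : Ω → ℝ} (hW : Measurable[m] W) (hc : Measurable[m] c)
    (hce : (fun ω => c ω * (1 - e ω)) =ᵐ[P] P[fun ω => (1 - Z ω) * V ω|m])
    (hT : Integrable T P)
    (hTeq : ∀ᵐ ω ∂P, T ω = Z ω * V ω + W ω * (Z ω * (V ω - mu ω)) + (1 - Z ω) * c ω) :
    ∫ ω, T ω ∂P = ∫ ω, V ω ∂P := by
  have hZ' : Measurable fun ω => 1 - Z ω := measurable_const.sub hZ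
  have hZ'01 (ω : Ω) : 1 - Z ω = 0 ∨ 1 - Z ω = 1 := by
    rcases hZ01 ω with h | h <;> simp [h]
  have hZV : Integrable (fun ω => Z ω * V ω) P := hV.zero_or_one_mul hZ hZ01
  have hZ'V : Integrable (fun ω => (1 - Z ω) * V ω) P := hV.zero_or_one_mul hZ' hZ'01
  have hWres : Integrable (fun ω => W ω * (Z ω * (V ω - mu ω))) P := by
    refine ((hT.sub hV).zero_or_one_mul hZ hZ01).congr ?_
    filter_upwards [hTeq] with ω hω
    rcases hZ01 ω with h | h <;> simp only [Pi.sub_apply, hω, h] <;> ring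
  have hZ'c : Integrable (fun ω => (1 - Z ω) * c ω) P := by
    refine (hT.zero_or_one_mul hZ' hZ'01).congr ?_
    filter_upwards [hTeq] with ω hω
    rcases hZ01 ω with h | h <;> simp only [hω, h] <;> ring
  have hZint : Integrable Z P := integrable_of_zero_or_one hZ hZ01
  calc ∫ ω, T ω ∂P
      = ∫ ω, Z ω * V ω ∂P + ∫ ω, W ω * (Z ω * (V ω - mu ω)) ∂P
          + ∫ ω, (1 - Z ω) * c ω ∂P := by
        have hsum : Integrable (fun ω => Z ω * V ω + W ω * (Z ω * (V ω - mu ω))) P :=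
          hZV.add hWres
        rw [integral_congr_ae hTeq, integral_add hsum hZ'c, integral_add hZV hWres]
    _ = ∫ ω, Z ω * V ω ∂P + ∫ ω, (1 - Z ω) * V ω ∂P := by
        rw [integral_mul_residual_eq_zero hm hZ hZ01 hV he hmu hmue hW hWres,
          integral_one_sub_mul_eq hm hZint he hc hce hZ'c, add_zero]
    _ = ∫ ω, V ω ∂P := by
        rw [← integral_add hZV hZ'V]
        exact integral_congr_ae (ae_of_all _ fun ω => by ring)

theorem integral_doublyRobust_treated (hm : m ≤ mΩ) (hZ : Measurable Z)
    (hZ01 : ∀ ω, Z ω = 0 ∨ Z ω = 1) (hV : Integrable V P) (he : e =ᵐ[P] P[Z|m])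
    (he0 : ∀ᵐ ω ∂P, e ω ≠ 0)
    (hmu : Measurable[m] mu) (hmue : (fun ω => mu ω * e ω) =ᵐ[P] P[fun ω => Z ω * V ω|m])
    {eps es : Ω → ℝ} (heps : Measurable[m] eps) (heps0 : ∀ᵐ ω ∂P, eps ω ≠ 0)
    (hsens : ∀ᵐ ω ∂P, (1 - e ω) * P[fun ω' => Z ω' * V ω'|m] ω
        = eps ω * e ω * P[fun ω' => (1 - Z ω') * V ω'|m] ω)
    (hes : Measurable[m] es) (hes0 : ∀ᵐ ω ∂P, es ω ≠ 0)
    (hT : Integrable (fun ω => (es ω + (1 - es ω) / eps ω) * (Z ω * V ω) / es ω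
        - (Z ω - es ω) * mu ω / (es ω * eps ω)) P) :
    ∫ ω, ((es ω + (1 - es ω) / eps ω) * (Z ω * V ω) / es ω
        - (Z ω - es ω) * mu ω / (es ω * eps ω)) ∂P = ∫ ω, V ω ∂P := by
  have hce : (fun ω => mu ω / eps ω * (1 - e ω)) =ᵐ[P]
      P[fun ω => (1 - Z ω) * V ω|m] := by
    filter_upwards [hsens, hmue, he0, heps0] with ω hsensω hmueω he0ω heps0ω
    rw [← hmueω] at hsensω
    field_simp
    apply mul_left_cancel₀ he0ω
    linarith
  refine integral_eq_of_ae_eq_augmented hm hZ hZ01 hV he hmu hmue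
    (W := fun ω => (1 - es ω) / (es ω * eps ω)) (c := fun ω => mu ω / eps ω)
    ((measurable_const.sub hes).div (hes.mul heps)) (hmu.div heps) hce hT ?_
  filter_upwards [hes0, heps0] with ω hes0ω heps0ω
  rcases hZ01 ω with h | h <;> rw [h] <;> field_simp <;> ring

theorem integral_doublyRobust_control (hm : m ≤ mΩ) (hZ : Measurable Z)
    (hZ01 : ∀ ω, Z ω = 0 ∨ Z ω = 1) (hV : Integrable V P) (he : e =ᵐ[P] P[Z|m])
    (he1 : ∀ᵐ ω ∂P, e ω ≠ 1) (hmu : Measurable[m] mu)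
    (hmue : (fun ω => mu ω * (1 - e ω)) =ᵐ[P] P[fun ω => (1 - Z ω) * V ω|m])
    {eps es : Ω → ℝ} (heps : Measurable[m] eps) (heps0 : ∀ᵐ ω ∂P, eps ω ≠ 0)
    (hsens : ∀ᵐ ω ∂P, (1 - e ω) * P[fun ω' => Z ω' * V ω'|m] ω
        = eps ω * e ω * P[fun ω' => (1 - Z ω') * V ω'|m] ω)
    (hes : Measurable[m] es) (hes1 : ∀ᵐ ω ∂P, es ω ≠ 1)
    (hT : Integrable (fun ω => (es ω * eps ω + 1 - es ω) * ((1 - Z ω) * V ω) / (1 - es ω)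
        - (es ω - Z ω) * (mu ω * eps ω) / (1 - es ω)) P) :
    ∫ ω, ((es ω * eps ω + 1 - es ω) * ((1 - Z ω) * V ω) / (1 - es ω)
        - (es ω - Z ω) * (mu ω * eps ω) / (1 - es ω)) ∂P = ∫ ω, V ω ∂P := by
  have hflip : ∀ᵐ ω ∂P, (es ω * eps ω + 1 - es ω) * ((1 - Z ω) * V ω) / (1 - es ω)
        - (es ω - Z ω) * (mu ω * eps ω) / (1 - es ω)
      = ((1 - es ω) + (1 - (1 - es ω)) / (eps ω)⁻¹) * ((1 - Z ω) * V ω) / (1 - es ω)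
        - ((1 - Z ω) - (1 - es ω)) * mu ω / ((1 - es ω) * (eps ω)⁻¹) := by
    filter_upwards [hes1, heps0] with ω hes1ω heps0ω
    have hes'ω : 1 - es ω ≠ 0 := sub_ne_zero.mpr hes1ω.symm
    field_simp
    ring
  rw [integral_congr_ae hflip]
  refine integral_doublyRobust_treated (Z := fun ω => 1 - Z ω) (e := fun ω => 1 - e ω)
    (eps := fun ω => (eps ω)⁻¹) (es := fun ω => 1 - es ω) hm (measurable_const.sub hZ)
    (fun ω => by rcases hZ01 ω with h | h <;> simp [h]) hV
    ((he.fun_comp (1 - ·)).trans (condExp_one_sub hm (integrable_of_zero_or_one hZ hZ01)).symm)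
    (he1.mono fun ω h => sub_ne_zero.mpr h.symm) hmu hmue heps.inv
    (heps0.mono fun ω h => inv_ne_zero h) ?_ (measurable_const.sub hes)
    (hes1.mono fun ω h => sub_ne_zero.mpr h.symm) (hT.congr hflip)
  rw [show (fun ω => (1 - (1 - Z ω)) * V ω) = fun ω => Z ω * V ω by funext ω; ring]
  filter_upwards [hsens, heps0] with ω hsensω heps0ω
  field_simp
  linarith

end Augmented

end MeasureTheory

open MeasureTheory

theorem double_robustness_correct_outcome_model_general
    {Ω : Type*} [F : MeasurableSpace Ω] (P : Measure Ω) [IsProbabilityMeasure P]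
    (Z Y1 Y0 Y : Ω → ℝ)
    (hZmeas : Measurable Z) (hZ01 : ∀ ω, Z ω = 0 ∨ Z ω = 1)
    (hY1int : Integrable Y1 P) (hY0int : Integrable Y0 P)
    (hYdef : ∀ ω, Y ω = Z ω * Y1 ω + (1 - Z ω) * Y0 ω)
    (mX : MeasurableSpace Ω) (hmX : mX ≤ F)
    (eX : Ω → ℝ) (heX : eX =ᵐ[P] P[Z|mX])
    (hov : ∀ᵐ ω ∂P, 0 < eX ω ∧ eX ω < 1)
    (mu1 mu0 : Ω → ℝ) (hmu1meas : Measurable[mX] mu1) (hmu0meas : Measurable[mX] mu0)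
    (hmu1 : (fun ω => mu1 ω * eX ω) =ᵐ[P] P[fun ω => Z ω * Y ω|mX])
    (hmu0 : (fun ω => mu0 ω * (1 - eX ω)) =ᵐ[P] P[fun ω => (1 - Z ω) * Y ω|mX])
    (eps1 eps0 : Ω → ℝ)
    (heps1meas : Measurable[mX] eps1) (heps0meas : Measurable[mX] eps0)
    (heps1pos : ∀ᵐ ω ∂P, 0 < eps1 ω) (heps0pos : ∀ᵐ ω ∂P, 0 < eps0 ω)
    (hsens1 : ∀ᵐ ω ∂P, (1 - eX ω) * (P[fun ω' => Z ω' * Y1 ω'|mX]) ω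
        = eps1 ω * eX ω * (P[fun ω' => (1 - Z ω') * Y1 ω'|mX]) ω)
    (hsens0 : ∀ᵐ ω ∂P, (1 - eX ω) * (P[fun ω' => Z ω' * Y0 ω'|mX]) ω
        = eps0 ω * eX ω * (P[fun ω' => (1 - Z ω') * Y0 ω'|mX]) ω)
    (es : Ω → ℝ) (hesmeas : Measurable[mX] es)
    (hes01 : ∀ᵐ ω ∂P, 0 < es ω ∧ es ω < 1)
    (hint1 : Integrable (fun ω =>
      (es ω + (1 - es ω) / eps1 ω) * (Z ω * Y ω) / es ω
        - (Z ω - es ω) * mu1 ω / (es ω * eps1 ω)) P)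
    (hint0 : Integrable (fun ω =>
      (es ω * eps0 ω + 1 - es ω) * ((1 - Z ω) * Y ω) / (1 - es ω)
        - (es ω - Z ω) * (mu0 ω * eps0 ω) / (1 - es ω)) P) :
    ∫ ω, ((es ω + (1 - es ω) / eps1 ω) * (Z ω * Y ω) / es ω
        - (Z ω - es ω) * mu1 ω / (es ω * eps1 ω)) ∂P
      - ∫ ω, ((es ω * eps0 ω + 1 - es ω) * ((1 - Z ω) * Y ω) / (1 - es ω)
        - (es ω - Z ω) * (mu0 ω * eps0 ω) / (1 - es ω)) ∂P
      = ∫ ω, Y1 ω ∂P - ∫ ω, Y0 ω ∂P := by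
  have hZY1 (ω : Ω) : Z ω * Y ω = Z ω * Y1 ω := by
    rcases hZ01 ω with h | h <;> simp [hYdef ω, h]
  have hZY0 (ω : Ω) : (1 - Z ω) * Y ω = (1 - Z ω) * Y0 ω := by
    rcases hZ01 ω with h | h <;> simp [hYdef ω, h]
  simp only [hZY1, hZY0] at hmu1 hmu0 hint1 hint0 ⊢
  rw [integral_doublyRobust_treated hmX hZmeas hZ01 hY1int heX (hov.mono fun _ h => h.1.ne')
      hmu1meas hmu1 heps1meas (heps1pos.mono fun _ h => h.ne') hsens1 hesmeas
      (hes01.mono fun _ h => h.1.ne') hint1,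
    integral_doublyRobust_control hmX hZmeas hZ01 hY0int heX (hov.mono fun _ h => h.2.ne)
      hmu0meas hmu0 heps0meas (heps0pos.mono fun _ h => h.ne') hsens0 hesmeas
      (hes01.mono fun _ h => h.2.ne) hint0]

/-- Theorem 4 (double robustness: correct outcome model). -/
theorem double_robustness_correct_outcome_model
    {Ω : Type*} [F : MeasurableSpace Ω] (P : Measure Ω) [IsProbabilityMeasure P]
    (Z Y1 Y0 Y : Ω → ℝ)
    (hZmeas : Measurable Z) (hZ01 : ∀ ω, Z ω = 0 ∨ Z ω = 1)
    (hY1int : Integrable Y1 P) (hY0int : Integrable Y0 P)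
    (hYdef : ∀ ω, Y ω = Z ω * Y1 ω + (1 - Z ω) * Y0 ω)
    (mX : MeasurableSpace Ω) (hmX : mX ≤ F)
    (eX : Ω → ℝ) (heXmeas : Measurable[mX] eX) (heX : eX =ᵐ[P] P[Z|mX])
    (hov : ∀ᵐ ω ∂P, 0 < eX ω ∧ eX ω < 1)
    (mu1 mu0 : Ω → ℝ) (hmu1meas : Measurable[mX] mu1) (hmu0meas : Measurable[mX] mu0)
    (hmu1 : (fun ω => mu1 ω * eX ω) =ᵐ[P] P[fun ω => Z ω * Y ω|mX])
    (hmu0 : (fun ω => mu0 ω * (1 - eX ω)) =ᵐ[P] P[fun ω => (1 - Z ω) * Y ω|mX])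
    (eps1 eps0 : Ω → ℝ)
    (heps1meas : Measurable[mX] eps1) (heps0meas : Measurable[mX] eps0)
    (heps1pos : ∀ᵐ ω ∂P, 0 < eps1 ω) (heps0pos : ∀ᵐ ω ∂P, 0 < eps0 ω)
    (hsens1 : ∀ᵐ ω ∂P, (1 - eX ω) * (P[fun ω' => Z ω' * Y1 ω'|mX]) ω
        = eps1 ω * eX ω * (P[fun ω' => (1 - Z ω') * Y1 ω'|mX]) ω)
    (hsens0 : ∀ᵐ ω ∂P, (1 - eX ω) * (P[fun ω' => Z ω' * Y0 ω'|mX]) ω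
        = eps0 ω * eX ω * (P[fun ω' => (1 - Z ω') * Y0 ω'|mX]) ω)
    (es : Ω → ℝ) (hesmeas : Measurable[mX] es)
    (hes01 : ∀ᵐ ω ∂P, 0 < es ω ∧ es ω < 1)
    (hint1 : Integrable (fun ω =>
      (es ω + (1 - es ω) / eps1 ω) * (Z ω * Y ω) / es ω
        - (Z ω - es ω) * mu1 ω / (es ω * eps1 ω)) P)
    (hint0 : Integrable (fun ω =>
      (es ω * eps0 ω + 1 - es ω) * ((1 - Z ω) * Y ω) / (1 - es ω)
        - (es ω - Z ω) * (mu0 ω * eps0 ω) / (1 - es ω)) P) :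
    ∫ ω, ((es ω + (1 - es ω) / eps1 ω) * (Z ω * Y ω) / es ω
        - (Z ω - es ω) * mu1 ω / (es ω * eps1 ω)) ∂P
      - ∫ ω, ((es ω * eps0 ω + 1 - es ω) * ((1 - Z ω) * Y ω) / (1 - es ω)
        - (es ω - Z ω) * (mu0 ω * eps0 ω) / (1 - es ω)) ∂P
      = ∫ ω, Y1 ω ∂P - ∫ ω, Y0 ω ∂P :=
  double_robustness_correct_outcome_model_general (F := F) P Z Y1 Y0 Y hZmeas hZ01 hY1int hY0int
    hYdef mX hmX eX heX hov mu1 mu0 hmu1meas hmu0meas hmu1 hmu0 eps1 eps0 heps1meas heps0meas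
    heps1pos heps0pos hsens1 hsens0 es hesmeas hes01 hint1 hint0
end

section
/- (Proposition S1, worst-case bounds for the average causal effect on the treated with non-negative outcomes.) Assume e := P(Z=1) > 0, Y(0) ≥ 0 almost surely, and there are constants 0 < ε_{0,L} ≤ ε_{0,U} with ε_{0,L} ≤ ε0(X) ≤ ε_{0,U} almost surely. Let τ_T = E[Y(1) − Y(0) ∣ Z=1]. Then E[Z·Y]/e − ε_{0,U}·E[Z·μ0(X)]/e ≤ τ_T ≤ E[Z·Y]/e − ε_{0,L}·E[Z·μ0(X)]/e. -/
/-!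
On the treated, `Y = Y(1)`, so `τ_T · e = E[Z·Y] − E[Z·Y(0)]`, and everything hinges on the
unobservable term `E[Z·Y(0)]`. By the tower property and the sensitivity model it equals
`E[ε₀(X)·e(X)·μ₀(X)]`, while pulling `μ₀(X)` out of `E[Z·μ₀(X) ∣ X]` gives
`E[Z·μ₀(X)] = E[e(X)·μ₀(X)]`. Since `Y(0) ≥ 0` forces `μ₀ ≥ 0`, the weight `e(X)·μ₀(X)` is
non-negative, and bounding `ε₀(X)` between `ε₀,L` and `ε₀,U` under the integral bounds
`E[Z·Y(0)]` between `ε₀,L·E[Z·μ₀(X)]` and `ε₀,U·E[Z·μ₀(X)]`.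
-/

open MeasureTheory ProbabilityTheory

section

variable {Ω : Type*} {mΩ : MeasurableSpace Ω} {μ : Measure Ω} {Z : Ω → ℝ}

lemma mul_eq_indicator_of_zero_or_one (hZ : ∀ ω, Z ω = 0 ∨ Z ω = 1) (f : Ω → ℝ) :
    (fun ω => Z ω * f ω) = {ω | Z ω = 1}.indicator f := by
  funext ω
  rcases hZ ω with h | h <;> simp [Set.indicator, h]

lemma Integrable.zero_or_one_mul (hZm : Measurable Z) (hZ : ∀ ω, Z ω = 0 ∨ Z ω = 1)
    {f : Ω → ℝ} (hf : Integrable f μ) : Integrable (fun ω => Z ω * f ω) μ := by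
  rw [mul_eq_indicator_of_zero_or_one hZ]
  exact hf.indicator (hZm (measurableSet_singleton 1))

lemma integral_cond_eq_integral_mul_div (hZm : Measurable Z) (hZ : ∀ ω, Z ω = 0 ∨ Z ω = 1)
    (f : Ω → ℝ) :
    ∫ ω, f ω ∂μ[|{ω | Z ω = 1}] = (∫ ω, Z ω * f ω ∂μ) / (μ {ω | Z ω = 1}).toReal := by
  have hs : MeasurableSet {ω | Z ω = 1} := hZm (measurableSet_singleton 1)
  rw [mul_eq_indicator_of_zero_or_one hZ, integral_indicator hs, ProbabilityTheory.cond,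
    integral_smul_measure, ENNReal.toReal_inv, smul_eq_mul, inv_mul_eq_div]

lemma ae_eq_mul_mul_of_one_sub_mul_eq {e ε h c d : Ω → ℝ} (he : ∀ᵐ ω ∂μ, e ω < 1)
    (hd : (fun ω => h ω * (1 - e ω)) =ᵐ[μ] d)
    (hc : ∀ᵐ ω ∂μ, (1 - e ω) * c ω = ε ω * e ω * d ω) :
    c =ᵐ[μ] fun ω => ε ω * (e ω * h ω) := by
  filter_upwards [he, hd, hc] with ω he hd hc
  refine mul_left_cancel₀ (sub_pos.mpr he).ne' ?_
  rw [hc, ← hd]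
  ring

lemma integral_mul_bounds {ε h : Ω → ℝ} {a b : ℝ} (hh : 0 ≤ᵐ[μ] h)
    (hε : ∀ᵐ ω ∂μ, a ≤ ε ω ∧ ε ω ≤ b) (hhi : Integrable h μ)
    (hεh : Integrable (fun ω => ε ω * h ω) μ) :
    a * ∫ ω, h ω ∂μ ≤ ∫ ω, ε ω * h ω ∂μ ∧ ∫ ω, ε ω * h ω ∂μ ≤ b * ∫ ω, h ω ∂μ := by
  rw [← integral_const_mul, ← integral_const_mul]
  constructor
  · refine integral_mono_ae (hhi.const_mul a) hεh ?_
    filter_upwards [hh, hε] with ω hh hε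
    exact mul_le_mul_of_nonneg_right hε.1 hh
  · refine integral_mono_ae hεh (hhi.const_mul b) ?_
    filter_upwards [hh, hε] with ω hh hε
    exact mul_le_mul_of_nonneg_right hε.2 hh

end

section CondExp

variable {Ω : Type*} {m m₀ : MeasurableSpace Ω} {μ : Measure Ω}

lemma integral_eq_of_condExp_ae_eq (hm : m ≤ m₀) [SigmaFinite (μ.trim hm)] {f g : Ω → ℝ}
    (h : μ[f|m] =ᵐ[μ] g) : ∫ ω, f ω ∂μ = ∫ ω, g ω ∂μ :=
  (integral_condExp hm).symm.trans (integral_congr_ae h)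

lemma condExp_mul_ae_eq_of_ae_eq_condExp {e f g : Ω → ℝ} (hg : AEStronglyMeasurable[m] g μ)
    (hfg : Integrable (fun ω => f ω * g ω) μ) (hf : Integrable f μ) (he : e =ᵐ[μ] μ[f|m]) :
    μ[fun ω => f ω * g ω|m] =ᵐ[μ] fun ω => e ω * g ω := by
  filter_upwards [condExp_mul_of_aestronglyMeasurable_right hg hfg hf, he] with ω h he
  exact h.trans (by rw [Pi.mul_apply, he])

lemma ae_nonneg_of_mul_one_sub_eq_condExp {e h g : Ω → ℝ} (he : ∀ᵐ ω ∂μ, e ω < 1)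
    (hg : 0 ≤ᵐ[μ] g) (hh : (fun ω => h ω * (1 - e ω)) =ᵐ[μ] μ[g|m]) : 0 ≤ᵐ[μ] h := by
  filter_upwards [he, hh, condExp_nonneg (m := m) hg] with ω he hh hg
  exact nonneg_of_mul_nonneg_left (hh ▸ hg) (sub_pos.mpr he)

end CondExp

theorem att_worst_case_bounds_nonneg_outcomes_general
    {Ω : Type*} [F : MeasurableSpace Ω] (P : Measure Ω) [IsProbabilityMeasure P]
    (Z Y1 Y0 Y : Ω → ℝ)
    (hZmeas : Measurable Z) (hZ01 : ∀ ω, Z ω = 0 ∨ Z ω = 1)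
    (hY0int : Integrable Y0 P)
    (hYdef : ∀ ω, Y ω = Z ω * Y1 ω + (1 - Z ω) * Y0 ω)
    (mX : MeasurableSpace Ω) (hmX : mX ≤ F)
    (eX : Ω → ℝ) (heX : eX =ᵐ[P] P[Z|mX])
    (hov : ∀ᵐ ω ∂P, 0 < eX ω ∧ eX ω < 1)
    (mu0 : Ω → ℝ) (hmu0meas : Measurable[mX] mu0)
    (hmu0 : (fun ω => mu0 ω * (1 - eX ω)) =ᵐ[P] P[fun ω => (1 - Z ω) * Y ω|mX])
    (eps0 : Ω → ℝ)
    (hsens0 : ∀ᵐ ω ∂P, (1 - eX ω) * (P[fun ω' => Z ω' * Y0 ω'|mX]) ω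
        = eps0 ω * eX ω * (P[fun ω' => (1 - Z ω') * Y0 ω'|mX]) ω)
    (hY0nn : ∀ᵐ ω ∂P, 0 ≤ Y0 ω)
    (e0L e0U : ℝ)
    (hb0 : ∀ᵐ ω ∂P, e0L ≤ eps0 ω ∧ eps0 ω ≤ e0U)
    (hintZY : Integrable (fun ω => Z ω * Y ω) P)
    (hintZmu0 : Integrable (fun ω => Z ω * mu0 ω) P)
    (tauT : ℝ)
    (htauT : tauT = ∫ ω, (Y1 ω - Y0 ω) ∂(ProbabilityTheory.cond P {ω | Z ω = 1})) :
    ((∫ ω, Z ω * Y ω ∂P) / (P {ω | Z ω = 1}).toReal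
        - e0U * (∫ ω, Z ω * mu0 ω ∂P) / (P {ω | Z ω = 1}).toReal ≤ tauT)
    ∧ (tauT ≤ (∫ ω, Z ω * Y ω ∂P) / (P {ω | Z ω = 1}).toReal
        - e0L * (∫ ω, Z ω * mu0 ω ∂P) / (P {ω | Z ω = 1}).toReal) := by
  have hY : ∀ ω, Z ω * Y ω = Z ω * Y1 ω ∧ (1 - Z ω) * Y ω = (1 - Z ω) * Y0 ω := fun ω => by
    rcases hZ01 ω with h | h <;> simp [hYdef ω, h]
  simp only [fun ω => (hY ω).2] at hmu0
  have hov1 : ∀ᵐ ω ∂P, eX ω < 1 := hov.mono fun _ h => h.2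
  have hZint : Integrable Z P := by
    simpa using Integrable.zero_or_one_mul (μ := P) hZmeas hZ01 (integrable_const 1)
  have hmu0nn : 0 ≤ᵐ[P] mu0 := ae_nonneg_of_mul_one_sub_eq_condExp hov1
    (hY0nn.mono fun ω h => mul_nonneg (by rcases hZ01 ω with hz | hz <;> simp [hz]) h) hmu0
  have hcond : P[fun ω => Z ω * Y0 ω|mX] =ᵐ[P] fun ω => eps0 ω * (eX ω * mu0 ω) :=
    ae_eq_mul_mul_of_one_sub_mul_eq hov1 hmu0 hsens0
  have hpull : P[fun ω => Z ω * mu0 ω|mX] =ᵐ[P] fun ω => eX ω * mu0 ω :=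
    condExp_mul_ae_eq_of_ae_eq_condExp hmu0meas.aestronglyMeasurable hintZmu0 hZint heX
  obtain ⟨hlow, hupp⟩ := integral_mul_bounds
    (hmu0nn.mp (hov.mono fun ω h hmu => mul_nonneg h.1.le hmu)) hb0
    (integrable_condExp.congr hpull) (integrable_condExp.congr hcond)
  have htau : tauT = ((∫ ω, Z ω * Y ω ∂P) - ∫ ω, Z ω * Y0 ω ∂P) / (P {ω | Z ω = 1}).toReal := by
    rw [htauT, integral_cond_eq_integral_mul_div hZmeas hZ01,
      ← integral_sub hintZY (Integrable.zero_or_one_mul hZmeas hZ01 hY0int)]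
    simp only [(hY _).1, mul_sub]
  rw [htau, ← sub_div, ← sub_div, integral_eq_of_condExp_ae_eq hmX hpull,
    integral_eq_of_condExp_ae_eq hmX hcond]
  constructor <;> gcongr

/-- Proposition S1 (worst-case bounds for the average causal effect on the treated
with non-negative outcomes). -/
theorem att_worst_case_bounds_nonneg_outcomes
    {Ω : Type*} [F : MeasurableSpace Ω] (P : Measure Ω) [IsProbabilityMeasure P]
    (Z Y1 Y0 Y : Ω → ℝ)
    (hZmeas : Measurable Z) (hZ01 : ∀ ω, Z ω = 0 ∨ Z ω = 1)
    (hY1int : Integrable Y1 P) (hY0int : Integrable Y0 P)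
    (hYdef : ∀ ω, Y ω = Z ω * Y1 ω + (1 - Z ω) * Y0 ω)
    (mX : MeasurableSpace Ω) (hmX : mX ≤ F)
    (eX : Ω → ℝ) (heXmeas : Measurable[mX] eX) (heX : eX =ᵐ[P] P[Z|mX])
    (hov : ∀ᵐ ω ∂P, 0 < eX ω ∧ eX ω < 1)
    (mu0 : Ω → ℝ) (hmu0meas : Measurable[mX] mu0)
    (hmu0 : (fun ω => mu0 ω * (1 - eX ω)) =ᵐ[P] P[fun ω => (1 - Z ω) * Y ω|mX])
    (eps0 : Ω → ℝ) (heps0meas : Measurable[mX] eps0)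
    (heps0pos : ∀ᵐ ω ∂P, 0 < eps0 ω)
    (hsens0 : ∀ᵐ ω ∂P, (1 - eX ω) * (P[fun ω' => Z ω' * Y0 ω'|mX]) ω
        = eps0 ω * eX ω * (P[fun ω' => (1 - Z ω') * Y0 ω'|mX]) ω)
    (he : 0 < P {ω | Z ω = 1})
    (hY0nn : ∀ᵐ ω ∂P, 0 ≤ Y0 ω)
    (e0L e0U : ℝ) (he0L : 0 < e0L) (he0LU : e0L ≤ e0U)
    (hb0 : ∀ᵐ ω ∂P, e0L ≤ eps0 ω ∧ eps0 ω ≤ e0U)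
    (hintZY : Integrable (fun ω => Z ω * Y ω) P)
    (hintZmu0 : Integrable (fun ω => Z ω * mu0 ω) P)
    (tauT : ℝ)
    (htauT : tauT = ∫ ω, (Y1 ω - Y0 ω) ∂(ProbabilityTheory.cond P {ω | Z ω = 1})) :
    ((∫ ω, Z ω * Y ω ∂P) / (P {ω | Z ω = 1}).toReal
        - e0U * (∫ ω, Z ω * mu0 ω ∂P) / (P {ω | Z ω = 1}).toReal ≤ tauT)
    ∧ (tauT ≤ (∫ ω, Z ω * Y ω ∂P) / (P {ω | Z ω = 1}).toReal
        - e0L * (∫ ω, Z ω * mu0 ω ∂P) / (P {ω | Z ω = 1}).toReal) :=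
  att_worst_case_bounds_nonneg_outcomes_general (F := F) P Z Y1 Y0 Y hZmeas hZ01 hY0int hYdef mX hmX
    eX heX hov mu0 hmu0meas hmu0 eps0 hsens0 hY0nn e0L e0U hb0 hintZY hintZmu0 tauT htauT
end
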